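/- arXiv:0706.3637 — 2 statements merged into one kernel-verified Lean document; each statement's English description precedes it below -/
import Mathlib

section
/- Let q(s) = 1 / max(1, s·log s) and Q(k) = ∫₀ᵏ q(s) ds. For all R̄ ≥ 0 and n̄ ≥ 2R̄ (with n̄ > R̄), the integral over the square Λ_{n̄} = [-n̄, n̄)² of q(|x| - R̄)² dx (where |x| is the maximum norm, and q is extended by q(t) = 1 for t < 0) is at most 16R̄² + 32·Q(n̄ - R̄). -/
/-!
A function of the maximum norm integrates over the square `[-n, n)²` to at most
`8 ∫₀ⁿ a g(a) da`: swapping the coordinates, it suffices to integrate over the cone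
`|x₂| ≤ |x₁|`, whose slice at `x₁ = a` has length `2|a|`. For `g(a) = q(a - R)²` split the
radial integral at `2R`: below, `q ≤ 1` gives `2R²`; above, `a ≤ 2(a - R)` and `s q(s) ≤ 2`
give `a q(a - R)² ≤ 4 q(a - R)`.
-/

open MeasureTheory

noncomputable def qext (t : ℝ) : ℝ := if t < 0 then 1 else 1 / max 1 (t * Real.log t)

open Set Real

theorem setIntegral_Icc_comp_abs (f : ℝ → ℝ) {n : ℝ} (hn : 0 ≤ n) :
    ∫ a in Icc (-n) n, f |a| = 2 * ∫ a in 0..n, f a := by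
  have h : (Icc (-n) n).indicator (fun a ↦ f |a|) = fun a ↦ (Iic n).indicator f |a| := by
    ext a
    simp only [indicator, mem_Icc, mem_Iic, ← abs_le]
  rw [← integral_indicator measurableSet_Icc, h, integral_comp_abs (f := (Iic n).indicator f),
    setIntegral_indicator measurableSet_Iic, Ioi_inter_Iic, intervalIntegral.integral_of_le hn]

theorem setIntegral_indicator_Icc_abs_le (s : Set ℝ) {a c : ℝ} (hc : 0 ≤ c) :
    ∫ b in s, (Icc (-|a|) |a|).indicator (fun _ ↦ c) b ≤ 2 * |a| * c := by
  rw [integral_indicator measurableSet_Icc, setIntegral_const, smul_eq_mul,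
    measureReal_restrict_apply measurableSet_Icc]
  gcongr
  calc volume.real (Icc (-|a|) |a| ∩ s) ≤ volume.real (Icc (-|a|) |a|) :=
        measureReal_mono inter_subset_left measure_Icc_lt_top.ne
    _ = 2 * |a| := by rw [Real.volume_real_Icc_of_le (by linarith [abs_nonneg a])]; ring

theorem comp_max_abs_le_indicator_add_indicator_swap {g : ℝ → ℝ} (hg : ∀ t, 0 ≤ g t)
    (x : ℝ × ℝ) :
    g (max |x.1| |x.2|) ≤ {y : ℝ × ℝ | |y.2| ≤ |y.1|}.indicator (fun y ↦ g |y.1|) x +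
      {y : ℝ × ℝ | |y.2| ≤ |y.1|}.indicator (fun y ↦ g |y.1|) x.swap := by
  rcases le_total |x.2| |x.1| with h | h
  · rw [max_eq_left h, indicator_of_mem (s := {y : ℝ × ℝ | |y.2| ≤ |y.1|}) h]
    exact le_add_of_nonneg_right (indicator_nonneg (fun y _ ↦ hg _) _)
  · rw [max_eq_right h, indicator_of_mem (s := {y : ℝ × ℝ | |y.2| ≤ |y.1|}) (a := x.swap) h]
    exact le_add_of_nonneg_left (indicator_nonneg (fun y _ ↦ hg _) _)

theorem setIntegral_square_comp_max_abs_le {g : ℝ → ℝ} (hg : Continuous g)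
    (hg0 : ∀ t, 0 ≤ g t) {n : ℝ} (hn : 0 ≤ n) :
    ∫ x in Ico (-n) n ×ˢ Ico (-n) n, g (max |x.1| |x.2|) ≤ 8 * ∫ a in 0..n, a * g a := by
  set μ := volume.restrict (Ico (-n) n)
  have hμ : volume.restrict (Ico (-n) n ×ˢ Ico (-n) n) = μ.prod μ := by
    rw [Measure.volume_eq_prod, Measure.prod_restrict]
  have hint₁ {f : ℝ → ℝ} (hf : Continuous f) : Integrable f μ :=
    hf.integrableOn_Icc.mono_set Ico_subset_Icc_self
  have hint₂ {f : ℝ × ℝ → ℝ} (hf : Continuous f) : Integrable f (μ.prod μ) := by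
    rw [← hμ]
    exact (hf.continuousOn.integrableOn_compact (isCompact_Icc.prod isCompact_Icc)).mono_set
      (prod_mono Ico_subset_Icc_self Ico_subset_Icc_self)
  set A := {y : ℝ × ℝ | |y.2| ≤ |y.1|}
  set H := A.indicator fun y ↦ g |y.1|
  have hH : Integrable H (μ.prod μ) :=
    (hint₂ (by fun_prop)).indicator (measurableSet_le (by fun_prop) (by fun_prop))
  have hH_slice (a : ℝ) : (fun b ↦ H (a, b)) = (Icc (-|a|) |a|).indicator fun _ ↦ g |a| := by
    ext b
    simp only [H, A, indicator, mem_ofPred_eq, mem_Icc, ← abs_le]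
  calc ∫ x in Ico (-n) n ×ˢ Ico (-n) n, g (max |x.1| |x.2|)
      = ∫ x, g (max |x.1| |x.2|) ∂μ.prod μ := by rw [hμ]
    _ ≤ ∫ x, (H x + H x.swap) ∂μ.prod μ :=
        integral_mono (hint₂ (by fun_prop)) (hH.add hH.swap)
          (comp_max_abs_le_indicator_add_indicator_swap hg0)
    _ = 2 * ∫ x, H x ∂μ.prod μ := by
        rw [integral_add hH (hH.swap : Integrable (fun x ↦ H x.swap) _), integral_prod_swap]
        ring
    _ = 2 * ∫ a, ∫ b, H (a, b) ∂μ ∂μ := by rw [integral_prod _ hH]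
    _ ≤ 2 * ∫ a, 2 * (|a| * g |a|) ∂μ := by
        gcongr 2 * ?_
        refine integral_mono hH.integral_prod_left
          (hint₁ (f := fun a ↦ 2 * (|a| * g |a|)) (by fun_prop)) fun a ↦ ?_
        rw [hH_slice, ← mul_assoc]
        exact setIntegral_indicator_Icc_abs_le _ (hg0 _)
    _ = 8 * ∫ a in 0..n, a * g a := by
        rw [← integral_Icc_eq_integral_Ico, integral_const_mul,
          setIntegral_Icc_comp_abs (fun a ↦ a * g a) hn]
        ring

theorem qext_eq_inv_max (t : ℝ) : qext t = (max 1 (t * log t))⁻¹ := by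
  rw [qext, one_div]
  split_ifs with ht
  · have hlog : 1 - (-t)⁻¹ ≤ log t :=
      log_neg_eq_log t ▸ one_sub_inv_le_log_of_pos (neg_pos.2 ht)
    have : t * log t ≤ 1 :=
      calc t * log t ≤ t * (1 - (-t)⁻¹) := mul_le_mul_of_nonpos_left hlog ht.le
        _ = t + 1 := by field_simp [ht.ne]; ring
        _ ≤ 1 := by linarith
    rw [max_eq_left this, inv_one]
  · rfl

@[fun_prop]
theorem continuous_qext : Continuous qext := by
  rw [funext qext_eq_inv_max]
  exact (continuous_const.max continuous_mul_log).inv₀ fun t ↦ by positivity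

theorem qext_nonneg (t : ℝ) : 0 ≤ qext t := by
  rw [qext_eq_inv_max]; positivity

theorem qext_le_one (t : ℝ) : qext t ≤ 1 := by
  rw [qext_eq_inv_max]; exact inv_le_one_of_one_le₀ (le_max_left _ _)

theorem mul_qext_le_two {t : ℝ} (ht : 0 ≤ t) : t * qext t ≤ 2 := by
  have hM : 0 < max 1 (t * log t) := by positivity
  rw [qext_eq_inv_max, ← div_eq_mul_inv, div_le_iff₀ hM]
  rcases le_or_gt t 2 with ht2 | ht2
  · nlinarith [le_max_left 1 (t * log t)]
  · have hlog : 1 / 2 ≤ log t := by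
      linarith [log_two_gt_d9, log_le_log two_pos ht2.le]
    nlinarith [le_max_right 1 (t * log t)]

open intervalIntegral in
theorem integral_mul_qext_sub_sq_le {R n : ℝ} (hR : 0 ≤ R) (hn : 2 * R ≤ n) :
    ∫ a in 0..n, a * qext (a - R) ^ 2 ≤ 2 * R ^ 2 + 4 * ∫ t in 0..n - R, qext t := by
  have hc : Continuous fun a ↦ a * qext (a - R) ^ 2 := by fun_prop
  rw [← integral_add_adjacent_intervals (hc.intervalIntegrable 0 (2 * R))
    (hc.intervalIntegrable (2 * R) n)]
  have h_near : ∫ a in 0..2 * R, a * qext (a - R) ^ 2 ≤ 2 * R ^ 2 :=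
    calc ∫ a in 0..2 * R, a * qext (a - R) ^ 2 ≤ ∫ a in 0..2 * R, a :=
          integral_mono_on (by linarith) (hc.intervalIntegrable _ _)
            (continuous_id.intervalIntegrable _ _) fun a ha ↦
            mul_le_of_le_one_right ha.1 (pow_le_one₀ (qext_nonneg _) (qext_le_one _))
      _ = 2 * R ^ 2 := by rw [integral_id]; ring
  have h_far : ∫ a in 2 * R..n, a * qext (a - R) ^ 2 ≤ 4 * ∫ t in 0..n - R, qext t :=
    calc ∫ a in 2 * R..n, a * qext (a - R) ^ 2 ≤ ∫ a in 2 * R..n, 4 * qext (a - R) := by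
          refine integral_mono_on hn (hc.intervalIntegrable _ _)
            ((by fun_prop : Continuous fun a ↦ 4 * qext (a - R)).intervalIntegrable _ _)
            fun a ha ↦ ?_
          have ht : 0 ≤ a - R := by linarith [ha.1]
          calc a * qext (a - R) ^ 2 ≤ 2 * (a - R) * qext (a - R) ^ 2 := by
                gcongr; linarith [ha.1]
            _ = 2 * ((a - R) * qext (a - R)) * qext (a - R) := by ring
            _ ≤ 2 * 2 * qext (a - R) := by
                gcongr
                · exact qext_nonneg _
                · exact mul_qext_le_two ht
            _ = 4 * qext (a - R) := by ring
      _ = 4 * ∫ t in R..n - R, qext t := by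
          rw [intervalIntegral.integral_const_mul, integral_comp_sub_right qext, two_mul,
            add_sub_cancel_right]
      _ ≤ 4 * ∫ t in 0..n - R, qext t := by
          gcongr
          exact integral_mono_interval hR (by linarith) le_rfl
            (Filter.Eventually.of_forall qext_nonneg) (continuous_qext.intervalIntegrable _ _)
  linarith

theorem stmt_4_general (Q : ℝ → ℝ) (hQ : ∀ k : ℝ, Q k = ∫ s in (0:ℝ)..k, qext s)
    (R n : ℝ) (hR : 0 ≤ R) (hn2 : 2 * R ≤ n) :
    (∫ x in (Set.Ico (-n) n ×ˢ Set.Ico (-n) n : Set (ℝ × ℝ)),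
        (qext (max |x.1| |x.2| - R))^2) ≤ 16 * R^2 + 32 * Q (n - R) := by
  calc _ ≤ 8 * ∫ a in 0..n, a * qext (a - R) ^ 2 :=
        setIntegral_square_comp_max_abs_le (g := fun t ↦ qext (t - R) ^ 2) (by fun_prop)
          (fun _ ↦ sq_nonneg _) (by linarith)
    _ ≤ 8 * (2 * R ^ 2 + 4 * Q (n - R)) := by
        rw [hQ]
        gcongr
        exact integral_mul_qext_sub_sq_le hR hn2
    _ = 16 * R ^ 2 + 32 * Q (n - R) := by ring

theorem stmt_4 (Q : ℝ → ℝ) (hQ : ∀ k : ℝ, Q k = ∫ s in (0:ℝ)..k, qext s)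
    (R n : ℝ) (hR : 0 ≤ R) (hn2 : 2 * R ≤ n) (hRn : R < n) :
    (∫ x in (Set.Ico (-n) n ×ˢ Set.Ico (-n) n : Set (ℝ × ℝ)),
        (qext (max |x.1| |x.2| - R))^2) ≤ 16 * R^2 + 32 * Q (n - R) :=
  stmt_4_general Q hQ R n hR hn2
end

section
/- Let f : ℝ → ℝ be continuous, strictly increasing, surjective, and differentiable outside a countable closed set M ⊆ ℝ with continuous derivative on ℝ ∖ M. Then for every Borel-measurable g : ℝ → [0,∞], ∫ g(f(x)) |f'(x)| dx = ∫ g(y) dy, where f' is defined arbitrarily (Lebesgue-a.e. well-defined) on M. -/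
open MeasureTheory Set

/-! Off the countable, hence Lebesgue-null, set `M`, the one-dimensional change of variables
formula applies to the injective map `f` on `Mᶜ`. Its image `f '' Mᶜ` misses from `range f = ℝ`
only part of the countable set `f '' M`, so integrating over it is integrating over `ℝ`. -/

theorem Set.Countable.image_compl_ae_eq_range {α β : Type*} [MeasurableSpace β]
    {μ : Measure β} [NullSingletonClass μ] {M : Set α} (hM : M.Countable) (f : α → β) :
    f '' Mᶜ =ᵐ[μ] range f := by
  refine ae_eq_set.2 ⟨by rw [sdiff_eq_empty.2 (image_subset_range f _), measure_empty],
    measure_mono_null ?_ ((hM.image f).measure_zero μ)⟩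
  rintro _ ⟨⟨x, rfl⟩, hx⟩
  exact ⟨x, not_not.1 fun hxM => hx ⟨x, hxM, rfl⟩, rfl⟩

theorem lintegral_comp_mul_abs_deriv_of_countable {f f' : ℝ → ℝ} {M : Set ℝ} (hM : M.Countable)
    (hf : ∀ x ∉ M, HasDerivAt f (f' x) x) (hinj : Function.Injective f) (g : ℝ → ENNReal) :
    ∫⁻ x, g (f x) * ENNReal.ofReal |f' x| = ∫⁻ y in range f, g y := by
  have hMc : ∀ᵐ x, x ∈ Mᶜ := compl_mem_ae_iff.2 (hM.measure_zero volume)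
  calc ∫⁻ x, g (f x) * ENNReal.ofReal |f' x|
      = ∫⁻ x in Mᶜ, ENNReal.ofReal |f' x| * g (f x) := by
        simp only [Measure.restrict_eq_self_of_ae_mem hMc, mul_comm]
    _ = ∫⁻ y in f '' Mᶜ, g y :=
        (lintegral_image_eq_lintegral_abs_deriv_mul hM.measurableSet.compl
          (fun x hx => (hf x hx).hasDerivWithinAt) hinj.injOn g).symm
    _ = ∫⁻ y in range f, g y := setLIntegral_congr (hM.image_compl_ae_eq_range f)

theorem stmt_18_general (f f' : ℝ → ℝ) (hmono : StrictMono f)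
    (hsurj : Function.Surjective f)
    (M : Set ℝ) (hMc : M.Countable)
    (hderiv : ∀ x ∉ M, HasDerivAt f (f' x) x) :
    ∀ g : ℝ → ENNReal, Measurable g →
      (∫⁻ x, g (f x) * ENNReal.ofReal |f' x|) = ∫⁻ y, g y := by
  intro g _
  rw [lintegral_comp_mul_abs_deriv_of_countable hMc hderiv hmono.injective g, hsurj.range_eq,
    Measure.restrict_univ]

theorem stmt_18 (f f' : ℝ → ℝ) (hcont : Continuous f) (hmono : StrictMono f)
    (hsurj : Function.Surjective f)
    (M : Set ℝ) (hMc : M.Countable) (hMcl : IsClosed M)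
    (hderiv : ∀ x ∉ M, HasDerivAt f (f' x) x)
    (hcd : ContinuousOn f' Mᶜ) :
    ∀ g : ℝ → ENNReal, Measurable g →
      (∫⁻ x, g (f x) * ENNReal.ofReal |f' x|) = ∫⁻ y, g y :=
  stmt_18_general f f' hmono hsurj M hMc hderiv
end
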